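/- Let f^0, ..., f^{n} be probability density functions on ℝ with finite second moments, means μ_i and variances σ_i², and suppose μ_i² + μ_j² + σ_i² + σ_j² > 0 for all i ≠ j. Then the sum over all pairs 0 ≤ i < j ≤ n of (1 − d_TV(f^i, f^j)) is at most the sum over all pairs of (1/2 + (2μ_i μ_j + σ_i² + σ_j²)/(2(μ_i² + μ_j² + σ_i² + σ_j²))). -/

import Mathlib

/-! For densities `f`, `g` with means `μ_f`, `μ_g`, Cauchy–Schwarz against the weight `|f - g|`
gives `(μ_f - μ_g)² ≤ (∫ y² |f - g|) (∫ |f - g|)`, and `|f - g| ≤ f + g` bounds the first factor by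
the sum of the second moments `μ_f² + σ_f² + μ_g² + σ_g²`. Since `∫ |f - g| = 2 d_TV(f, g)`, this is
the lower bound `d_TV(f, g) ≥ (μ_f - μ_g)² / (2 (μ_f² + μ_g² + σ_f² + σ_g²))` on every pair,
which rearranges to the claimed bound on `1 - d_TV(f, g)`. -/

open MeasureTheory Finset

noncomputable def dTV (f g : ℝ → ℝ) : ℝ := (1/2) * ∫ x, |f x - g x|

section

variable {α : Type*} [MeasurableSpace α] {μ : Measure α}

-- The quadratic `t ↦ ∫ (u - t)² w` is nonnegative, so its discriminant is nonpositive.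
theorem sq_integral_mul_le_integral_sq_mul_mul_integral {u w : α → ℝ} (hw : 0 ≤ᵐ[μ] w)
    (hw_int : Integrable w μ) (huw : Integrable (fun x => u x * w x) μ)
    (hu2w : Integrable (fun x => u x ^ 2 * w x) μ) :
    (∫ x, u x * w x ∂μ) ^ 2 ≤ (∫ x, u x ^ 2 * w x ∂μ) * ∫ x, w x ∂μ := by
  have hquad : ∀ t : ℝ, 0 ≤ (∫ x, w x ∂μ) * (t * t) + (-2 * ∫ x, u x * w x ∂μ) * t
      + ∫ x, u x ^ 2 * w x ∂μ := by
    intro t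
    have hexpand : ∫ x, (u x - t) ^ 2 * w x ∂μ = (∫ x, w x ∂μ) * (t * t)
        + (-2 * ∫ x, u x * w x ∂μ) * t + ∫ x, u x ^ 2 * w x ∂μ := by
      have hpt : (fun x => (u x - t) ^ 2 * w x)
          = fun x => (t * t) * w x + (-2 * t) * (u x * w x) + u x ^ 2 * w x := by
        ext x; ring
      rw [hpt, integral_add ?_ hu2w, integral_add ?_ ?_, integral_const_mul, integral_const_mul]
      · ring
      exacts [hw_int.const_mul _, huw.const_mul _, (hw_int.const_mul _).add (huw.const_mul _)]
    rw [← hexpand]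
    exact integral_nonneg_of_ae (hw.mono fun x hx => mul_nonneg (sq_nonneg _) hx)
  have := discrim_le_zero hquad
  rw [discrim] at this
  linarith

theorem sq_sub_integral_mul_le {φ f g : α → ℝ} (hf0 : 0 ≤ᵐ[μ] f) (hg0 : 0 ≤ᵐ[μ] g)
    (hf : Integrable f μ) (hg : Integrable g μ)
    (hf1 : Integrable (fun x => φ x * f x) μ) (hg1 : Integrable (fun x => φ x * g x) μ)
    (hf2 : Integrable (fun x => φ x ^ 2 * f x) μ) (hg2 : Integrable (fun x => φ x ^ 2 * g x) μ) :
    ((∫ x, φ x * f x ∂μ) - ∫ x, φ x * g x ∂μ) ^ 2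
      ≤ ((∫ x, φ x ^ 2 * f x ∂μ) + ∫ x, φ x ^ 2 * g x ∂μ) * ∫ x, |f x - g x| ∂μ := by
  have habs1 : Integrable (fun x => |φ x| * |f x - g x|) μ :=
    (hf1.sub hg1).abs.congr (.of_forall fun x => by simp only [Pi.sub_apply, ← mul_sub, abs_mul])
  have habs2 : Integrable (fun x => |φ x| ^ 2 * |f x - g x|) μ :=
    (hf2.sub hg2).abs.congr
      (.of_forall fun x => by simp only [Pi.sub_apply, ← mul_sub, abs_mul, abs_pow])
  have hfirst : |(∫ x, φ x * f x ∂μ) - ∫ x, φ x * g x ∂μ| ≤ ∫ x, |φ x| * |f x - g x| ∂μ := by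
    rw [← integral_sub hf1 hg1]
    refine (abs_integral_le_integral_abs).trans_eq (integral_congr_ae (.of_forall fun x => ?_))
    simp only [← mul_sub, abs_mul]
  have hsecond : ∫ x, |φ x| ^ 2 * |f x - g x| ∂μ
      ≤ (∫ x, φ x ^ 2 * f x ∂μ) + ∫ x, φ x ^ 2 * g x ∂μ := by
    rw [← integral_add hf2 hg2]
    refine integral_mono_ae habs2 (hf2.add hg2) ?_
    filter_upwards [hf0, hg0] with x (hfx : 0 ≤ f x) (hgx : 0 ≤ g x)
    have : |f x - g x| ≤ f x + g x := abs_sub_le_iff.mpr ⟨by linarith, by linarith⟩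
    rw [sq_abs]
    nlinarith [sq_nonneg (φ x)]
  calc ((∫ x, φ x * f x ∂μ) - ∫ x, φ x * g x ∂μ) ^ 2
      ≤ (∫ x, |φ x| * |f x - g x| ∂μ) ^ 2 := by
        rw [← sq_abs]
        exact pow_le_pow_left₀ (abs_nonneg _) hfirst 2
    _ ≤ (∫ x, |φ x| ^ 2 * |f x - g x| ∂μ) * ∫ x, |f x - g x| ∂μ :=
        sq_integral_mul_le_integral_sq_mul_mul_integral (.of_forall fun _ => abs_nonneg _)
          (hf.sub hg).abs habs1 habs2
    _ ≤ _ := mul_le_mul_of_nonneg_right hsecond (integral_nonneg fun _ => abs_nonneg _)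

end

theorem stmt_6_general (n : ℕ) (f : Fin (n + 1) → ℝ → ℝ) (μ σ : Fin (n + 1) → ℝ)
    (hfi : ∀ i, Integrable (f i))
    (hf0 : ∀ i x, 0 ≤ f i x)
    (hfi1 : ∀ i, Integrable (fun y => y * f i y))
    (hfi2 : ∀ i, Integrable (fun y => y ^ 2 * f i y))
    (hμ : ∀ i, μ i = ∫ y, y * f i y)
    (hσ : ∀ i, σ i ^ 2 = (∫ y, y ^ 2 * f i y) - μ i ^ 2)
    (hpos : ∀ i j, i ≠ j → 0 < μ i ^ 2 + μ j ^ 2 + σ i ^ 2 + σ j ^ 2) :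
    ∑ i : Fin (n + 1), ∑ j ∈ Finset.Ioi i, (1 - dTV (f i) (f j)) ≤
    ∑ i : Fin (n + 1), ∑ j ∈ Finset.Ioi i,
      (1/2 + (2 * μ i * μ j + σ i ^ 2 + σ j ^ 2) /
        (2 * (μ i ^ 2 + μ j ^ 2 + σ i ^ 2 + σ j ^ 2))) := by
  refine sum_le_sum fun i _ => sum_le_sum fun j hj => ?_
  set D := μ i ^ 2 + μ j ^ 2 + σ i ^ 2 + σ j ^ 2
  have hD : 0 < D := hpos i j (mem_Ioi.mp hj).ne
  have hmoment : (μ i - μ j) ^ 2 ≤ D * (2 * dTV (f i) (f j)) := by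
    have := sq_sub_integral_mul_le (φ := id) (.of_forall (hf0 i)) (.of_forall (hf0 j))
      (hfi i) (hfi j) (hfi1 i) (hfi1 j) (hfi2 i) (hfi2 j)
    have hsecond : (∫ y, y ^ 2 * f i y) + ∫ y, y ^ 2 * f j y = D := by linarith [hσ i, hσ j]
    simp only [id, ← hμ, hsecond] at this
    rw [dTV]
    linarith
  have hrearrange : (1 : ℝ) / 2 + (2 * μ i * μ j + σ i ^ 2 + σ j ^ 2) / (2 * D)
      = 1 - (μ i - μ j) ^ 2 / (2 * D) := by
    field_simp
    ring
  rw [hrearrange, sub_le_sub_iff_left, div_le_iff₀ (by positivity)]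
  linarith

theorem stmt_6 (n : ℕ) (f : Fin (n + 1) → ℝ → ℝ) (μ σ : Fin (n + 1) → ℝ)
    (hfm : ∀ i, Measurable (f i)) (hfi : ∀ i, Integrable (f i))
    (hf0 : ∀ i x, 0 ≤ f i x) (hf1 : ∀ i, ∫ x, f i x = 1)
    (hfi1 : ∀ i, Integrable (fun y => y * f i y))
    (hfi2 : ∀ i, Integrable (fun y => y ^ 2 * f i y))
    (hμ : ∀ i, μ i = ∫ y, y * f i y)
    (hσ : ∀ i, σ i ^ 2 = (∫ y, y ^ 2 * f i y) - μ i ^ 2)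
    (hpos : ∀ i j, i ≠ j → 0 < μ i ^ 2 + μ j ^ 2 + σ i ^ 2 + σ j ^ 2) :
    ∑ i : Fin (n + 1), ∑ j ∈ Finset.Ioi i, (1 - dTV (f i) (f j)) ≤
    ∑ i : Fin (n + 1), ∑ j ∈ Finset.Ioi i,
      (1/2 + (2 * μ i * μ j + σ i ^ 2 + σ j ^ 2) /
        (2 * (μ i ^ 2 + μ j ^ 2 + σ i ^ 2 + σ j ^ 2))) :=
  stmt_6_general n f μ σ hfi hf0 hfi1 hfi2 hμ hσ hpos
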